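/- arXiv:0712.0833 — 5 statements merged into one kernel-verified Lean document; each statement's English description precedes it below -/
import Mathlib

section
/- Let D be a Dedekind domain, I = ∏ᵢ₌₁ⁿ Mᵢ^{eᵢ} a nonzero proper ideal with distinct maximal ideals Mᵢ, and let E be a Dedekind domain that is an integral extension of D such that for each i, the maximal ideals of E lying over Mᵢ are Pᵢ,₁,…,Pᵢ,ₛᵢ with MᵢE_{Pᵢⱼ} = Pᵢⱼ^{eᵢⱼ}E_{Pᵢⱼ}. Then IE = ∏ᵢ ∏ⱼ Pᵢⱼ^{eᵢ·eᵢⱼ}. -/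
/-!
Since `E` is a Dedekind domain, `MᵢE` is the product of its normalized prime factors. Every such
factor contains `MᵢE ≠ 0`, hence is a maximal ideal lying over the maximal ideal `Mᵢ`, i.e. one of the
`Pᵢⱼ`, and its multiplicity in `MᵢE` is the ramification index `eᵢⱼ`. So `MᵢE = ∏ⱼ Pᵢⱼ^{eᵢⱼ}`, and
the theorem follows because extension of ideals is multiplicative.
-/

open UniqueFactorizationMonoid

namespace Ideal

theorem eq_prod_pow_count_normalizedFactors {E ι : Type*} [CommRing E] [IsDedekindDomain E]
    [Fintype ι] [DecidableEq (Ideal E)] {J : Ideal E} (hJ : J ≠ ⊥) {P : ι → Ideal E}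
    (hP : Function.Injective P) (hfactors : ∀ Q ∈ normalizedFactors J, ∃ j, Q = P j) :
    J = ∏ j, P j ^ (normalizedFactors J).count (P j) :=
  calc J = (normalizedFactors J).prod := (prod_normalizedFactors_eq_self hJ).symm
    _ = ∏ Q ∈ Finset.univ.image P, Q ^ (normalizedFactors J).count Q := by
      refine Finset.prod_multiset_count_of_subset _ _ fun Q hQ => ?_
      obtain ⟨j, rfl⟩ := hfactors Q (Multiset.mem_toFinset.mp hQ)
      exact Finset.mem_image_of_mem P (Finset.mem_univ j)
    _ = _ := Finset.prod_image fun _ _ _ _ h => hP h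

theorem isMaximal_of_mem_normalizedFactors {E : Type*} [CommRing E] [IsDedekindDomain E]
    {J Q : Ideal E} (hJ : J ≠ ⊥) (hQ : Q ∈ normalizedFactors J) : Q.IsMaximal := by
  obtain ⟨hQprime, hJQ⟩ := (mem_normalizedFactors_iff hJ).mp hQ
  exact hQprime.isMaximal fun hQ0 => hJ (le_bot_iff.mp (hQ0 ▸ hJQ))

theorem comap_eq_of_mem_normalizedFactors_map {D E : Type*} [CommRing D] [CommRing E]
    [IsDedekindDomain E] {f : D →+* E} {m : Ideal D} (hm : m.IsMaximal) (hmap : map f m ≠ ⊥)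
    {Q : Ideal E} (hQ : Q ∈ normalizedFactors (map f m)) : Q.comap f = m :=
  (hm.eq_of_le (comap_ne_top f (isMaximal_of_mem_normalizedFactors hmap hQ).ne_top)
    (map_le_iff_le_comap.mp ((mem_normalizedFactors_iff hmap).mp hQ).2)).symm

theorem map_eq_prod_pow_ramificationIdx' {D E ι : Type*} [CommRing D] [CommRing E]
    [IsDedekindDomain E] [Algebra D E] [Fintype ι] {m : Ideal D} (hm : m.IsMaximal)
    (hmap : map (algebraMap D E) m ≠ ⊥) {P : ι → Ideal E} (hPinj : Function.Injective P)
    (hPprime : ∀ j, (P j).IsPrime) (hPover : ∀ j, (P j).comap (algebraMap D E) = m)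
    (hPall : ∀ Q : Ideal E, Q.IsMaximal → Q.comap (algebraMap D E) = m → ∃ j, Q = P j) :
    map (algebraMap D E) m = ∏ j, P j ^ ramificationIdx' m (P j) := by
  classical
  have hP0 (j : ι) : P j ≠ ⊥ := fun hP0 =>
    hmap (le_bot_iff.mp (hP0 ▸ map_le_iff_le_comap.mpr (hPover j).ge))
  simp only [IsDedekindDomain.ramificationIdx'_eq_normalizedFactors_count hmap (hPprime _) (hP0 _)]
  exact eq_prod_pow_count_normalizedFactors hmap hPinj fun Q hQ =>
    hPall Q (isMaximal_of_mem_normalizedFactors hmap hQ)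
      (comap_eq_of_mem_normalizedFactors_map hm hmap hQ)

end Ideal

theorem stmt3_general {D E : Type*} [CommRing D]
    [CommRing E] [IsDedekindDomain E] [Algebra D E]
    (hinj : Function.Injective (algebraMap D E))
    {n : ℕ} (M : Fin n → Ideal D) (e : Fin n → ℕ)
    (hmax : ∀ i, (M i).IsMaximal) (he : ∀ i, 0 < e i)
    (I : Ideal D) (hI0 : I ≠ ⊥) (hI : I = ∏ i, M i ^ e i)
    (s : Fin n → ℕ) (P : (i : Fin n) → Fin (s i) → Ideal E)
    (hPinj : ∀ i, Function.Injective (P i))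
    (hPmax : ∀ i j, (P i j).IsMaximal)
    (hPover : ∀ i j, (P i j).comap (algebraMap D E) = M i)
    (hPall : ∀ (i : Fin n) (Q : Ideal E), Q.IsMaximal →
      Q.comap (algebraMap D E) = M i → ∃ j, Q = P i j)
    (ee : (i : Fin n) → Fin (s i) → ℕ)
    (hee : ∀ i j, Ideal.ramificationIdx' (M i) (P i j) = ee i j) :
    Ideal.map (algebraMap D E) I = ∏ i, ∏ j, P i j ^ (e i * ee i j) := by
  have hM0 (i : Fin n) : M i ≠ ⊥ := fun hMi =>
    hI0 (hI ▸ Finset.prod_eq_zero (Finset.mem_univ i) (hMi ▸ zero_pow (he i).ne'))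
  have hMmap (i : Fin n) : Ideal.map (algebraMap D E) (M i) = ∏ j, P i j ^ ee i j := by
    simpa only [hee] using Ideal.map_eq_prod_pow_ramificationIdx' (hmax i)
      ((Ideal.map_eq_bot_iff_of_injective hinj).not.mpr (hM0 i)) (hPinj i)
      (fun j => (hPmax i j).isPrime) (hPover i) (hPall i)
  rw [hI]
  refine (map_prod (Ideal.mapHom (algebraMap D E)) _ _).trans
    (Finset.prod_congr rfl fun i _ => ?_)
  simp only [Ideal.mapHom_apply, Ideal.map_pow, hMmap, ← Finset.prod_pow, ← pow_mul, mul_comm]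

/-- Let D ⊆ E be Dedekind domains with E integral over D, let
I = ∏ᵢ Mᵢ^{eᵢ} be a nonzero proper ideal of D with the Mᵢ distinct maximal ideals.
Suppose that for each i the maximal ideals of E lying over Mᵢ are exactly
Pᵢ,₁, …, Pᵢ,ₛᵢ (distinct), with ramification index e(Pᵢⱼ/Mᵢ) = eᵢⱼ.
Then IE = ∏ᵢ ∏ⱼ Pᵢⱼ^{eᵢ·eᵢⱼ}. -/
theorem stmt3 {D E : Type*} [CommRing D] [IsDomain D] [IsDedekindDomain D]
    [CommRing E] [IsDomain E] [IsDedekindDomain E] [Algebra D E]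
    (hinj : Function.Injective (algebraMap D E)) [Algebra.IsIntegral D E]
    {n : ℕ} (hn : 0 < n) (M : Fin n → Ideal D) (e : Fin n → ℕ)
    (hMinj : Function.Injective M) (hmax : ∀ i, (M i).IsMaximal) (he : ∀ i, 0 < e i)
    (I : Ideal D) (hI0 : I ≠ ⊥) (hItop : I ≠ ⊤) (hI : I = ∏ i, M i ^ e i)
    (s : Fin n → ℕ) (hs : ∀ i, 0 < s i) (P : (i : Fin n) → Fin (s i) → Ideal E)
    (hPinj : ∀ i, Function.Injective (P i))
    (hPmax : ∀ i j, (P i j).IsMaximal)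
    (hPover : ∀ i j, (P i j).comap (algebraMap D E) = M i)
    (hPall : ∀ (i : Fin n) (Q : Ideal E), Q.IsMaximal →
      Q.comap (algebraMap D E) = M i → ∃ j, Q = P i j)
    (ee : (i : Fin n) → Fin (s i) → ℕ)
    (hee : ∀ i j, Ideal.ramificationIdx' (M i) (P i j) = ee i j) :
    Ideal.map (algebraMap D E) I = ∏ i, ∏ j, P i j ^ (e i * ee i j) :=
  stmt3_general hinj M e hmax he I hI0 hI s P hPinj hPmax hPover hPall ee hee
end

section
/- Let R be a Noetherian domain of Krull dimension one and I a nonzero proper ideal of R. Then there exists a finite integral extension domain A of R and a radical ideal H of A and positive integers m, n such that the integral closures of H^m and (IA)^n coincide; moreover H = Rad(IA). -/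
/-!
Let `N > 0` with `rad(I)ᴺ ⊆ I`, and let `A = R[β]` be obtained by adjoining, inside an algebraic
closure of the fraction field, an `N`-th root `β_a` of every generator `a` of `I`. For
`X = (β)A` we have `IA ⊆ Xᴺ`, and `Xᴺ ⊆ (IA)_a` because each `β_a ^ N` lies in `IA`. Moreover
`X ⊆ rad(IA) ⊆ X_a`: write `h ∈ rad(IA)` as `c + x` with `c ∈ R`, `x ∈ X` (possible since
`A = R + X`); lying over gives `c ∈ rad I`, so `cᴺ ∈ I ⊆ Xᴺ`. Hence
`(rad(IA)ᴺ)_a = (Xᴺ)_a = (IA)_a`.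

The calculus of integral closures of ideals comes from the Rees algebra: `x ∈ (Iᵏ)_a` iff
`x tᵏ` is integral over `R[It]`.
-/

/-- The integral closure `I_a` of an ideal `I` of `R` in `R`: the set of `x ∈ R`
satisfying an equation `xⁿ + a₁xⁿ⁻¹ + ⋯ + aₙ = 0` with `aᵢ ∈ Iⁱ`. -/
def integralClosureOfIdeal {R : Type*} [CommRing R] (I : Ideal R) : Set R :=
  {x | ∃ n : ℕ, 0 < n ∧ ∃ a : ℕ → R, (∀ i ∈ Finset.Icc 1 n, a i ∈ I ^ i) ∧
    x ^ n + ∑ i ∈ Finset.Icc 1 n, a i * x ^ (n - i) = 0}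

/-- A finite integral extension domain of `R`: an integral domain containing `R`
(the structure map is injective) which is a finitely generated `R`-module
(hence integral over `R`). -/
structure FiniteIntegralExtensionDomain (R : Type u) [CommRing R] : Type (u + 1) where
  carrier : Type u
  [commRing : CommRing carrier]
  [isDomain : IsDomain carrier]
  [algebra : Algebra R carrier]
  injective : Function.Injective (algebraMap R carrier)
  finite : Module.Finite R carrier

attribute [instance] FiniteIntegralExtensionDomain.commRing
  FiniteIntegralExtensionDomain.isDomain FiniteIntegralExtensionDomain.algebra

open Polynomial Finset

theorem Finset.sum_Icc_one_eq_sum_range_sub {M : Type*} [AddCommMonoid M] (f : ℕ → M) (n : ℕ) :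
    ∑ i ∈ Icc 1 n, f i = ∑ j ∈ range n, f (n - j) := by
  refine sum_nbij' (n - ·) (n - ·) ?_ ?_ ?_ ?_ ?_ <;> intro i hi <;>
    simp only [mem_Icc, mem_range] at hi ⊢
  all_goals first | omega | exact congrArg f (by omega)

theorem IsIntegral.of_le_integralClosure {R B : Type*} [CommRing R] [CommRing B] [Algebra R B]
    {S T : Subalgebra R B} (hT : T ≤ (integralClosure S B).restrictScalars R) {y : B}
    (hy : IsIntegral T y) : IsIntegral S y := by
  let C := integralClosure S B
  let f : T →+* C :=
    { toFun t := ⟨t, hT t.2⟩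
      map_one' := rfl
      map_mul' _ _ := rfl
      map_zero' := rfl
      map_add' _ _ := rfl }
  obtain ⟨p, hp, hpy⟩ := hy
  refine isIntegral_trans (A := C) y ⟨p.map f, hp.map f, ?_⟩
  rw [eval₂_map]
  exact hpy

theorem Ideal.comap_map_le_radical_of_isIntegral {R S : Type*} [CommRing R] [CommRing S]
    [Algebra R S] [Algebra.IsIntegral R S] (hinj : Function.Injective (algebraMap R S))
    (I : Ideal R) : (I.map (algebraMap R S)).comap (algebraMap R S) ≤ I.radical := by
  rw [Ideal.radical_eq_sInf]
  refine le_sInf fun P ⟨hIP, hP⟩ => ?_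
  obtain ⟨Q, -, -, hQP⟩ := Ideal.exists_ideal_over_prime_of_isIntegral P (⊥ : Ideal S) <| by
    rw [← RingHom.ker_eq_comap_bot, (RingHom.injective_iff_ker_eq_bot _).mp hinj]
    exact bot_le
  rw [← hQP] at hIP ⊢
  exact Ideal.comap_mono (Ideal.map_le_iff_le_comap.mpr hIP)

theorem Algebra.exists_sub_algebraMap_mem_span_of_adjoin_eq_top {R A : Type*} [CommRing R]
    [CommRing A] [Algebra R A] {T : Set A} (hT : Algebra.adjoin R T = ⊤) (b : A) :
    ∃ c : R, b - algebraMap R A c ∈ Ideal.span T := by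
  have hb : b ∈ Algebra.adjoin R T := hT ▸ Algebra.mem_top
  induction hb using Algebra.adjoin_induction with
  | mem t ht => exact ⟨0, by simpa using Ideal.subset_span ht⟩
  | algebraMap r => exact ⟨r, by simp⟩
  | add x y _ _ hx hy =>
    obtain ⟨c, hc⟩ := hx
    obtain ⟨d, hd⟩ := hy
    exact ⟨c + d, by simpa [add_sub_add_comm] using add_mem hc hd⟩
  | mul x y _ _ hx hy =>
    obtain ⟨c, hc⟩ := hx
    obtain ⟨d, hd⟩ := hy
    refine ⟨c * d, ?_⟩
    have e : x * y - algebraMap R A (c * d) =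
        (x - algebraMap R A c) * y + algebraMap R A c * (y - algebraMap R A d) := by
      rw [map_mul]; ring
    rw [e]
    exact add_mem (Ideal.mul_mem_right _ _ hc) (Ideal.mul_mem_left _ _ hd)

section IntegralClosureOfIdeal

variable {R : Type*} [CommRing R] {I L : Ideal R} {x : R}

theorem mem_integralClosureOfIdeal_iff :
    x ∈ integralClosureOfIdeal L ↔ ∃ n, 0 < n ∧ ∃ c : ℕ → R,
      (∀ j, c j ∈ L ^ (n - j)) ∧ x ^ n + ∑ j ∈ range n, c j * x ^ j = 0 := by
  constructor
  · rintro ⟨n, hn, a, ha, he⟩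
    refine ⟨n, hn, fun j => if j < n then a (n - j) else 0, fun j => ?_, Eq.trans ?_ he⟩
    · by_cases hj : j < n
      · simpa only [if_pos hj] using ha _ (mem_Icc.mpr ⟨by omega, by omega⟩)
      · simp only [if_neg hj, zero_mem]
    · rw [sum_Icc_one_eq_sum_range_sub]
      refine congrArg _ (sum_congr rfl fun j hj => ?_)
      simp only [if_pos (mem_range.mp hj), Nat.sub_sub_self (mem_range.mp hj).le]
  · rintro ⟨n, hn, c, hc, he⟩
    refine ⟨n, hn, fun i => c (n - i), fun i hi => ?_, Eq.trans ?_ he⟩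
    · simpa only [Nat.sub_sub_self (mem_Icc.mp hi).2] using hc (n - i)
    · rw [sum_Icc_one_eq_sum_range_sub]
      refine congrArg _ (sum_congr rfl fun j hj => ?_)
      simp only [Nat.sub_sub_self (mem_range.mp hj).le]

theorem isIntegral_reesAlgebra_monomial_of_mem {k : ℕ}
    (hx : x ∈ integralClosureOfIdeal (I ^ k)) : IsIntegral (reesAlgebra I) (monomial k x) := by
  obtain ⟨n, -, c, hc, he⟩ := mem_integralClosureOfIdeal_iff.mp hx
  have hmem : ∀ j, monomial (k * (n - j)) (c j) ∈ reesAlgebra I := fun j =>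
    reesAlgebra.monomial_mem.mpr (by rw [pow_mul]; exact hc j)
  refine ⟨X ^ n + ∑ j ∈ range n, C ⟨_, hmem j⟩ * X ^ j,
    monic_X_pow_add (by simp_rw [← Fin.sum_univ_eq_sum_range, degree_sum_fin_lt]), ?_⟩
  rw [← aeval_def]
  simp only [map_add, map_sum, map_mul, map_pow, aeval_X, aeval_C, monomial_pow]
  calc monomial (k * n) (x ^ n) + ∑ j ∈ range n,
        monomial (k * (n - j)) (c j) * monomial (k * j) (x ^ j)
      = monomial (k * n) (x ^ n + ∑ j ∈ range n, c j * x ^ j) := by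
        rw [map_add, map_sum]
        refine congrArg _ (sum_congr rfl fun j hj => ?_)
        rw [monomial_mul_monomial, ← mul_add, Nat.sub_add_cancel (mem_range.mp hj).le]
    _ = 0 := by rw [he, map_zero]

theorem mem_integralClosureOfIdeal_pow_of_isIntegral {k : ℕ}
    (hx : IsIntegral (reesAlgebra I) (monomial k x)) : x ∈ integralClosureOfIdeal (I ^ k) := by
  obtain ⟨q, hq, hqx⟩ := hx
  rcases subsingleton_or_nontrivial R with hR | hR
  · exact ⟨1, one_pos, 0, fun _ _ => zero_mem _, Subsingleton.elim _ _⟩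
  set n := q.natDegree
  have hn : 0 < n := by
    refine Nat.pos_of_ne_zero fun h0 => ?_
    rw [hq.natDegree_eq_zero.mp h0, eval₂_one] at hqx
    exact one_ne_zero hqx
  refine mem_integralClosureOfIdeal_iff.mpr
    ⟨n, hn, fun j => (q.coeff j : R[X]).coeff (k * (n - j)), fun j => ?_, ?_⟩
  · rw [← pow_mul]
    exact (q.coeff j).2 _
  · rw [← aeval_def, hq.as_sum] at hqx
    have hcoeff := congrArg (coeff · (k * n)) hqx
    simp only [map_add, map_sum, map_mul, map_pow, aeval_X, aeval_C, monomial_pow] at hcoeff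
    rw [coeff_add, coeff_monomial, if_pos rfl, finsetSum_coeff, coeff_zero] at hcoeff
    refine Eq.trans (congrArg _ (sum_congr rfl fun j hj => ?_)) hcoeff
    rw [show k * n = k * (n - j) + k * j by
      rw [← mul_add, Nat.sub_add_cancel (mem_range.mp hj).le], coeff_mul_monomial]
    rfl

theorem mem_integralClosureOfIdeal_pow_iff_isIntegral {k : ℕ} :
    x ∈ integralClosureOfIdeal (I ^ k) ↔ IsIntegral (reesAlgebra I) (monomial k x) :=
  ⟨isIntegral_reesAlgebra_monomial_of_mem, mem_integralClosureOfIdeal_pow_of_isIntegral⟩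

theorem mem_integralClosureOfIdeal_iff_isIntegral :
    x ∈ integralClosureOfIdeal L ↔ IsIntegral (reesAlgebra L) (monomial 1 x) := by
  rw [← mem_integralClosureOfIdeal_pow_iff_isIntegral, pow_one]

end IntegralClosureOfIdeal

namespace Ideal

open scoped Pointwise

variable {R : Type*} [CommRing R]

def integralClosure (L : Ideal R) : Ideal R where
  carrier := integralClosureOfIdeal L
  zero_mem' := mem_integralClosureOfIdeal_iff_isIntegral.mpr <| by
    rw [map_zero]
    exact isIntegral_zero
  add_mem' hx hy := mem_integralClosureOfIdeal_iff_isIntegral.mpr <| by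
    rw [map_add]
    exact (mem_integralClosureOfIdeal_iff_isIntegral.mp hx).add
      (mem_integralClosureOfIdeal_iff_isIntegral.mp hy)
  smul_mem' r _ hx := mem_integralClosureOfIdeal_iff_isIntegral.mpr <| by
    rw [← smul_monomial]
    exact (mem_integralClosureOfIdeal_iff_isIntegral.mp hx).smul r

variable {I L L' : Ideal R} {x : R}

theorem mem_integralClosure_pow_iff_isIntegral {k : ℕ} :
    x ∈ (I ^ k).integralClosure ↔ IsIntegral (reesAlgebra I) (monomial k x) :=
  mem_integralClosureOfIdeal_pow_iff_isIntegral

theorem le_integralClosure : L ≤ L.integralClosure := fun x hx =>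
  mem_integralClosureOfIdeal_iff_isIntegral.mpr <| isIntegral_algebraMap
    (x := (⟨_, reesAlgebra.monomial_mem.mpr (by rwa [pow_one])⟩ : reesAlgebra L))

theorem integralClosure_top : (⊤ : Ideal R).integralClosure = ⊤ :=
  top_le_iff.mp le_integralClosure

theorem integralClosure_mono (h : L' ≤ L) : L'.integralClosure ≤ L.integralClosure := by
  rintro x ⟨n, hn, a, ha, he⟩
  exact ⟨n, hn, a, fun i hi => pow_right_mono h i (ha i hi), he⟩

theorem integralClosure_pow_mul_le (a b : ℕ) :
    (I ^ a).integralClosure * (I ^ b).integralClosure ≤ (I ^ (a + b)).integralClosure :=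
  mul_le.mpr fun x hx y hy => mem_integralClosure_pow_iff_isIntegral.mpr <| by
    rw [← monomial_mul_monomial]
    exact (mem_integralClosure_pow_iff_isIntegral.mp hx).mul
      (mem_integralClosure_pow_iff_isIntegral.mp hy)

theorem integralClosure_pow_mul_le_succ (k : ℕ) :
    (I ^ k).integralClosure * I.integralClosure ≤ (I ^ (k + 1)).integralClosure := by
  simpa only [pow_one] using integralClosure_pow_mul_le (I := I) k 1

theorem integralClosure_pow_le (k : ℕ) : I.integralClosure ^ k ≤ (I ^ k).integralClosure := by
  induction k with
  | zero => rw [pow_zero, pow_zero, one_eq_top, integralClosure_top]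
  | succ k ih =>
    rw [pow_succ]
    exact (mul_mono ih le_rfl).trans (integralClosure_pow_mul_le_succ k)

theorem mem_integralClosure_of_pow_mem {k : ℕ} (hk : 0 < k)
    (hx : x ^ k ∈ (L ^ k).integralClosure) : x ∈ L.integralClosure := by
  rw [mem_integralClosure_pow_iff_isIntegral, show monomial k (x ^ k) = monomial 1 x ^ k by
    rw [monomial_pow, one_mul]] at hx
  exact mem_integralClosureOfIdeal_iff_isIntegral.mpr (hx.of_pow hk)

theorem integralClosure_le_of_le (h : L' ≤ L.integralClosure) :
    L'.integralClosure ≤ L.integralClosure := by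
  have hrees : reesAlgebra L' ≤ (_root_.integralClosure (reesAlgebra L) R[X]).restrictScalars R := by
    rw [← adjoin_monomial_eq_reesAlgebra]
    refine Algebra.adjoin_le ?_
    rintro _ ⟨l, hl, rfl⟩
    exact mem_integralClosureOfIdeal_iff_isIntegral.mp (h hl)
  exact fun x hx => mem_integralClosureOfIdeal_iff_isIntegral.mpr <|
    (mem_integralClosureOfIdeal_iff_isIntegral.mp hx).of_le_integralClosure hrees

-- Products of `i` elements of `S` have `N`-th powers in `(Jⁱ)_a`; take `i = N` and extract roots.
theorem span_pow_le_integralClosure {S : Set R} {J : Ideal R} {N : ℕ} (hN : 0 < N)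
    (hS : ∀ s ∈ S, s ^ N ∈ J) : span S ^ N ≤ J.integralClosure := by
  have hpow : ∀ i, ∀ z ∈ S ^ i, z ^ N ∈ (J ^ i).integralClosure := by
    intro i
    induction i with
    | zero =>
      rintro _ rfl
      rw [pow_zero, one_eq_top, integralClosure_top]
      exact Submodule.mem_top
    | succ i ih =>
      rintro _ ⟨z, hz, s, hs, rfl⟩
      rw [mul_pow]
      exact integralClosure_pow_mul_le_succ i
        (mul_mem_mul (ih z hz) (le_integralClosure (hS s hs)))
  change Submodule.span R S ^ N ≤ _
  rw [Submodule.span_pow, Submodule.span_le]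
  exact fun z hz => mem_integralClosure_of_pow_mem hN (hpow N z hz)

theorem integralClosure_span_pow_eq {S : Set R} {J : Ideal R} {N : ℕ} (hN : 0 < N)
    (hS : ∀ s ∈ S, s ^ N ∈ J) (hJ : J ≤ span S ^ N) :
    (span S ^ N).integralClosure = J.integralClosure :=
  le_antisymm (integralClosure_le_of_le (span_pow_le_integralClosure hN hS))
    (integralClosure_mono hJ)

theorem integralClosure_pow_eq_of_le_of_le_integralClosure {X H : Ideal R} (hXH : X ≤ H)
    (hHX : H ≤ X.integralClosure) (k : ℕ) :
    (H ^ k).integralClosure = (X ^ k).integralClosure :=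
  le_antisymm (integralClosure_le_of_le ((pow_right_mono hHX k).trans (integralClosure_pow_le k)))
    (integralClosure_mono (pow_right_mono hXH k))

variable {A : Type*} [CommRing A] [Algebra R A] [Algebra.IsIntegral R A]

theorem radical_map_le_integralClosure (hinj : Function.Injective (algebraMap R A))
    {X : Ideal A} {N : ℕ} (hN : 0 < N) (hNI : I.radical ^ N ≤ I)
    (hIX : I.map (algebraMap R A) ≤ X ^ N) (hXI : X ≤ (I.map (algebraMap R A)).radical)
    (hX : ∀ b, ∃ c, b - algebraMap R A c ∈ X) :
    (I.map (algebraMap R A)).radical ≤ X.integralClosure := by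
  intro b hb
  obtain ⟨c, hc⟩ := hX b
  have hcJ : algebraMap R A c ∈ (I.map (algebraMap R A)).radical := by
    simpa using sub_mem hb (hXI hc)
  have hcI : c ∈ I.radical := by
    have h := radical_mono (comap_map_le_radical_of_isIntegral hinj I)
    rw [radical_idem, ← comap_radical] at h
    exact h hcJ
  have hcX : algebraMap R A c ∈ X.integralClosure := by
    refine mem_integralClosure_of_pow_mem hN (le_integralClosure (hIX ?_))
    rw [← map_pow]
    exact mem_map_of_mem _ (hNI (pow_mem_pow hcI N))
  rw [← sub_add_cancel b (algebraMap R A c)]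
  exact add_mem (le_integralClosure hc) hcX

theorem integralClosure_radical_map_pow_eq (hinj : Function.Injective (algebraMap R A))
    {N : ℕ} (hN : 0 < N) (hNI : I.radical ^ N ≤ I) {T : Set A}
    (hT : Algebra.adjoin R T = ⊤) (hTI : ∀ t ∈ T, t ^ N ∈ I.map (algebraMap R A))
    (hIT : I.map (algebraMap R A) ≤ span T ^ N) :
    ((I.map (algebraMap R A)).radical ^ N).integralClosure =
      (I.map (algebraMap R A)).integralClosure := by
  have hTrad : span T ≤ (I.map (algebraMap R A)).radical :=
    span_le.mpr fun t ht => ⟨N, hTI t ht⟩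
  have hradT := radical_map_le_integralClosure hinj hN hNI hIT hTrad
    (Algebra.exists_sub_algebraMap_mem_span_of_adjoin_eq_top hT)
  rw [integralClosure_pow_eq_of_le_of_le_integralClosure hTrad hradT,
    integralClosure_span_pow_eq hN hTI hIT]

end Ideal

theorem FiniteIntegralExtensionDomain.exists_pow_eq_algebraMap {R : Type u} [CommRing R]
    [IsDomain R] {ι : Type*} [Finite ι] (a : ι → R) {N : ℕ} (hN : 0 < N) :
    ∃ (A : FiniteIntegralExtensionDomain R) (β : ι → A.carrier),
      (∀ i, β i ^ N = algebraMap R A.carrier (a i)) ∧ Algebra.adjoin R (Set.range β) = ⊤ := by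
  let Ω := AlgebraicClosure (FractionRing R)
  have hinj : Function.Injective (algebraMap R Ω) := by
    rw [IsScalarTower.algebraMap_eq R (FractionRing R) Ω]
    exact (algebraMap (FractionRing R) Ω).injective.comp (IsFractionRing.injective R _)
  choose α hα using fun i => IsAlgClosed.exists_pow_nat_eq (algebraMap R Ω (a i)) hN
  have hint : ∀ x ∈ Set.range α, IsIntegral R x := by
    rintro _ ⟨i, rfl⟩
    refine ⟨X ^ N - C (a i), monic_X_pow_sub_C _ hN.ne', ?_⟩
    simp [hα]
  let B := Algebra.adjoin R (Set.range α)
  have hrange : Set.range (fun i => (⟨α i, Algebra.subset_adjoin ⟨i, rfl⟩⟩ : B)) =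
      ((↑) : B → Ω) ⁻¹' Set.range α := by
    ext ⟨x, hx⟩
    simp
  refine ⟨⟨B, fun x y h => hinj (congrArg Subtype.val h),
    Algebra.finite_adjoin_of_finite_of_isIntegral (Set.finite_range α) hint⟩,
    fun i => ⟨α i, Algebra.subset_adjoin ⟨i, rfl⟩⟩, fun i => Subtype.ext (hα i), ?_⟩
  exact hrange ▸ Algebra.adjoin_adjoin_coe_preimage

theorem stmt7_general {R : Type u} [CommRing R] [IsDomain R] [IsNoetherianRing R]
    (I : Ideal R) :
    ∃ (A : FiniteIntegralExtensionDomain R) (H : Ideal A.carrier) (m n : ℕ),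
      0 < m ∧ 0 < n ∧
      integralClosureOfIdeal (H ^ m) =
        integralClosureOfIdeal ((I.map (algebraMap R A.carrier)) ^ n) ∧
      H = (I.map (algebraMap R A.carrier)).radical := by
  obtain ⟨ν, hν⟩ := I.exists_radical_pow_le_of_fg (IsNoetherian.noetherian _)
  obtain ⟨s, rfl⟩ := IsNoetherian.noetherian I
  obtain ⟨A, β, hβ, hadj⟩ :=
    FiniteIntegralExtensionDomain.exists_pow_eq_algebraMap (fun t : s => (t : R)) ν.succ_pos
  have := A.finite
  have hTI : ∀ t ∈ Set.range β, t ^ (ν + 1) ∈ (Ideal.span s).map (algebraMap R A.carrier) := by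
    rintro _ ⟨i, rfl⟩
    rw [hβ]
    exact Ideal.mem_map_of_mem _ (Ideal.subset_span i.2)
  have hIT :
      (Ideal.span s).map (algebraMap R A.carrier) ≤ Ideal.span (Set.range β) ^ (ν + 1) := by
    rw [Ideal.map_span, Ideal.span_le]
    rintro _ ⟨a, ha, rfl⟩
    rw [show a = ((⟨a, ha⟩ : s) : R) from rfl, ← hβ]
    exact Ideal.pow_mem_pow (Ideal.subset_span (Set.mem_range_self _)) _
  refine ⟨A, _, ν + 1, 1, ν.succ_pos, one_pos, ?_, rfl⟩
  rw [pow_one]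
  exact congrArg SetLike.coe <| Ideal.integralClosure_radical_map_pow_eq A.injective ν.succ_pos
    ((Ideal.pow_le_pow_right ν.le_succ).trans hν) hadj hTI hIT

/-- Let R be a Noetherian domain of Krull dimension one and I a nonzero
proper ideal of R. Then there exists a finite integral extension domain A of R and a
radical ideal H of A and positive integers m, n such that (H^m)_a = ((IA)^n)_a
(i.e. H is projectively equivalent to IA); moreover H = Rad(IA). -/
theorem stmt7 {R : Type u} [CommRing R] [IsDomain R] [IsNoetherianRing R]
    (hdim : ringKrullDim R = 1) (I : Ideal R) (hI0 : I ≠ ⊥) (hItop : I ≠ ⊤) :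
    ∃ (A : FiniteIntegralExtensionDomain R) (H : Ideal A.carrier) (m n : ℕ),
      0 < m ∧ 0 < n ∧
      integralClosureOfIdeal (H ^ m) =
        integralClosureOfIdeal ((I.map (algebraMap R A.carrier)) ^ n) ∧
      H = (I.map (algebraMap R A.carrier)).radical :=
  stmt7_general I
end

section
/- Let R be a Noetherian domain of Krull dimension one with quotient field F, I a nonzero proper ideal of R, L a finite algebraic extension field of F, and E the integral closure of R in L. Suppose there exist distinct maximal ideals N₁,…,Nₙ of E and positive integers k₁,…,kₙ, h with IE = (N₁^{k₁} ⋯ Nₙ^{kₙ})^h. Then there exists a module-finite integral extension domain A of R with quotient field L and an ideal H of A such that (H^h)_a = (IA)_a. -/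
/-!
Since `I` is finitely generated, the equality `IE = J ^ h` (with `J = ∏ Nᵢ ^ kᵢ`) is witnessed by
finitely many elements of `E`: the generators `X` of a finitely generated `J' ≤ J` with
`IE = J' ^ h`, and the coefficients expressing the generators of `I` through the `h`-fold products
of elements of `X` and conversely. In any subalgebra `A` containing all of them, the ideal `H`
generated by `X` satisfies `H ^ h = IA` on the nose. Adjoining also an integral basis of `L` over
`Frac R` makes `A` module-finite over `R` with fraction field `L`.
-/

set_option synthInstance.maxHeartbeats 1000000
set_option maxHeartbeats 1000000

open Pointwise

theorem Set.Finite.exists_finite_subset_of_subset_pow {M : Type*} [Monoid M] {s T : Set M}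
    {n : ℕ} (hT : T.Finite) (hTs : T ⊆ s ^ n) : ∃ X ⊆ s, X.Finite ∧ T ⊆ X ^ n := by
  have hfactor : ∀ t ∈ T, ∃ X ⊆ s, X.Finite ∧ t ∈ X ^ n := fun t ht => by
    obtain ⟨f, rfl⟩ := Set.mem_pow.1 (hTs ht)
    exact ⟨Set.range fun i => (f i : M), Set.range_subset_iff.2 fun i => (f i).2,
      Set.finite_range _, Set.mem_pow.2 ⟨fun i => ⟨f i, Set.mem_range_self i⟩, rfl⟩⟩
  choose X hXs hXfin hmem using hfactor
  refine ⟨⋃ t, ⋃ ht : t ∈ T, X t ht, Set.iUnion₂_subset hXs, hT.biUnion' hXfin,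
    fun t ht => Set.pow_subset_pow_left (Set.subset_iUnion₂ (s := fun t ht => X t ht) t ht)
      (hmem t ht)⟩

theorem Ideal.exists_finite_subset_le_span_pow {E : Type*} [CommRing E] {J K : Ideal E}
    {n : ℕ} (hK : K.FG) (hKJ : K ≤ J ^ n) :
    ∃ X ⊆ (J : Set E), X.Finite ∧ K ≤ Ideal.span X ^ n := by
  obtain ⟨G, rfl⟩ := hK
  rw [Submodule.pow_eq_span_pow_set, Submodule.span_le] at hKJ
  obtain ⟨T, hTJ, hGT⟩ := Submodule.subset_span_finite_of_subset_span hKJ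
  obtain ⟨X, hXJ, hXfin, hTX⟩ := T.finite_toSet.exists_finite_subset_of_subset_pow hTJ
  refine ⟨X, hXJ, hXfin, ?_⟩
  rw [Ideal.span, Submodule.span_pow, Submodule.span_le]
  exact hGT.trans (Submodule.span_mono hTX)

section

variable {R B : Type*} [CommRing R] [CommRing B] [Algebra R B]

theorem Subalgebra.exists_finite_forall_subset_span (E : Subalgebra R B) {s t : Set B}
    (hs : s.Finite) (hst : s ⊆ Submodule.span E t) :
    ∃ C ⊆ (E : Set B), C.Finite ∧ ∀ A : Subalgebra R B, C ⊆ A → s ⊆ Submodule.span A t := by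
  have hcoeff : ∀ x ∈ s, ∃ (p : ℕ) (c : Fin p → E) (m : Fin p → t), ∑ i, c i • (m i : B) = x :=
    fun x hx => Submodule.mem_span_set'.1 (hst hx)
  choose p c m hsum using hcoeff
  refine ⟨⋃ x, ⋃ hx : x ∈ s, Set.range fun i => (c x hx i : B), ?_,
    hs.biUnion' fun x hx => Set.finite_range _, fun A hCA x hx => ?_⟩
  · exact Set.iUnion₂_subset fun x hx => Set.range_subset_iff.2 fun i => (c x hx i).2
  · have hcA : ∀ i, (c x hx i : B) ∈ A := fun i =>
      hCA (Set.mem_iUnion₂.2 ⟨x, hx, Set.mem_range_self i⟩)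
    rw [← hsum x hx]
    exact Submodule.sum_mem _ fun i _ =>
      Submodule.smul_mem _ (⟨_, hcA i⟩ : A) (Submodule.subset_span (m x hx i).2)

/- Ideals of different subalgebras `A` are compared through their images in `B`, as
`A`-submodules; this map is injective, and spans in `B` only involve finitely many coefficients. -/
theorem Subalgebra.map_span_preimage_pow (A : Subalgebra R B) {X : Set B} (hX : X ⊆ A) (n : ℕ) :
    Submodule.map (Algebra.linearMap A B) (Ideal.span (Subtype.val ⁻¹' X : Set A) ^ n) =
      Submodule.span A (X ^ n) := by
  rw [Ideal.span, Submodule.span_pow, Submodule.map_span]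
  change Submodule.span A ((A.val : A → B) '' _) = _
  rw [Set.image_pow, Subalgebra.coe_val,
    Set.image_preimage_eq_of_subset (by rwa [Subtype.range_coe])]

theorem Subalgebra.map_map_algebraMap_span (A : Subalgebra R B) (G : Set R) :
    Submodule.map (Algebra.linearMap A B) ((Ideal.span G).map (algebraMap R A)) =
      Submodule.span A (algebraMap R B '' G) := by
  rw [Ideal.map_span, Ideal.span, Submodule.map_span, Set.image_image]
  rfl

theorem Subalgebra.exists_finite_forall_exists_pow_eq_map (E : Subalgebra R B) {I : Ideal R}
    (hI : I.FG) {J : Ideal E} {n : ℕ} (hIJ : I.map (algebraMap R E) = J ^ n) :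
    ∃ T ⊆ (E : Set B), T.Finite ∧
      ∀ A : Subalgebra R B, T ⊆ A → ∃ H : Ideal A, H ^ n = I.map (algebraMap R A) := by
  obtain ⟨X, hXJ, hXfin, hle⟩ := Ideal.exists_finite_subset_le_span_pow (hI.map _) hIJ.le
  have hIX : I.map (algebraMap R E) = Ideal.span X ^ n :=
    le_antisymm hle (hIJ ▸ Ideal.pow_right_mono (Ideal.span_le.2 hXJ) n)
  obtain ⟨G, rfl⟩ := hI
  set Y : Set B := Subtype.val '' X
  have hYE : Y ⊆ E := by
    rintro _ ⟨x, -, rfl⟩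
    exact x.2
  have hspanE : Submodule.span E (Y ^ n) = Submodule.span E (algebraMap R B '' G) := by
    rw [← E.map_span_preimage_pow hYE, ← E.map_map_algebraMap_span,
      Set.preimage_image_eq X Subtype.val_injective, ← hIX]
  have hYfin : Y.Finite := hXfin.image _
  have hYnfin : (Y ^ n).Finite := by
    classical
    rw [← hYfin.coe_toFinset, ← Finset.coe_pow]
    exact Finset.finite_toSet _
  obtain ⟨C₁, hC₁E, hC₁fin, hC₁⟩ := E.exists_finite_forall_subset_span hYnfin
    (by rw [← hspanE]; exact Submodule.subset_span)
  obtain ⟨C₂, hC₂E, hC₂fin, hC₂⟩ := E.exists_finite_forall_subset_span (G.finite_toSet.image _)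
    (by rw [hspanE]; exact Submodule.subset_span)
  refine ⟨Y ∪ C₁ ∪ C₂, Set.union_subset (Set.union_subset hYE hC₁E) hC₂E,
    (hYfin.union hC₁fin).union hC₂fin, fun A hTA => ⟨Ideal.span (Subtype.val ⁻¹' Y), ?_⟩⟩
  have hYA : Y ⊆ A := Set.subset_union_left.trans Set.subset_union_left |>.trans hTA
  apply Submodule.map_injective_of_injective (f := Algebra.linearMap A B) Subtype.val_injective
  rw [A.map_span_preimage_pow hYA, A.map_map_algebraMap_span]
  exact le_antisymm
    (Submodule.span_le.2 (hC₁ A ((Set.subset_union_right.trans Set.subset_union_left).trans hTA)))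
    (Submodule.span_le.2 (hC₂ A (Set.subset_union_right.trans hTA)))

end

theorem Subalgebra.isFractionRing_of_span_eq_top {R K L : Type*} [CommRing R] [Field K]
    [Field L] [Algebra R K] [IsFractionRing R K] [Algebra K L] [Algebra R L]
    [IsScalarTower R K L] (A : Subalgebra R L) (hA : Submodule.span K (A : Set L) = ⊤) :
    IsFractionRing A L := by
  refine IsFractionRing.of_field A L fun z => ?_
  obtain ⟨y, hy, s, rfl⟩ :=
    (IsLocalization.mem_span_iff (nonZeroDivisors R)).1 (hA ▸ Submodule.mem_top (x := z))
  rw [← Subalgebra.coe_toSubmodule, Submodule.span_eq] at hy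
  refine ⟨⟨y, hy⟩, algebraMap R A s, ?_⟩
  rw [Algebra.smul_def, IsFractionRing.mk'_eq_div, map_div₀, map_one, map_one,
    ← IsScalarTower.algebraMap_apply, one_div, ← div_eq_inv_mul]
  rfl

theorem stmt10_general {R : Type*} [CommRing R] [IsDomain R] [IsNoetherianRing R]
    (I : Ideal R)
    (L : Type*) [Field L] [Algebra R L] [Algebra (FractionRing R) L]
    [IsScalarTower R (FractionRing R) L] [FiniteDimensional (FractionRing R) L]
    {n : ℕ} (N : Fin n → Ideal (integralClosure R L))
    (k : Fin n → ℕ) (h : ℕ)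
    (hIE : I.map (algebraMap R (integralClosure R L)) = (∏ i, N i ^ k i) ^ h) :
    ∃ A : Subalgebra R L, Module.Finite R A ∧ Algebra.IsIntegral R A ∧
      IsFractionRing A L ∧
      ∃ H : Ideal A, integralClosureOfIdeal (H ^ h) =
        integralClosureOfIdeal (I.map (algebraMap R A)) := by
  obtain ⟨T, hTE, hTfin, hT⟩ := (integralClosure R L).exists_finite_forall_exists_pow_eq_map
    (IsNoetherian.noetherian I) hIE
  obtain ⟨s, b, hb⟩ := FiniteDimensional.exists_is_basis_integral R (FractionRing R) L
  have hfin : Module.Finite R (Algebra.adjoin R (T ∪ Set.range b)) := by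
    refine Module.Finite.iff_fg.2 (fg_adjoin_of_finite (hTfin.union (Set.finite_range b)) ?_)
    rintro x (hx | ⟨i, rfl⟩)
    exacts [hTE hx, hb i]
  have hspan :
      Submodule.span (FractionRing R) (Algebra.adjoin R (T ∪ Set.range b) : Set L) = ⊤ :=
    top_le_iff.1 <| b.span_eq ▸
      Submodule.span_mono (Set.subset_union_right.trans Algebra.subset_adjoin)
  obtain ⟨H, hH⟩ := hT _ (Set.subset_union_left.trans Algebra.subset_adjoin)
  exact ⟨_, hfin, Algebra.IsIntegral.of_finite R _,
    Subalgebra.isFractionRing_of_span_eq_top _ hspan, H, by rw [hH]⟩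

/-- Lemma 2.6: Let R be a Noetherian domain of Krull dimension one with
quotient field F, I a nonzero proper ideal of R, L a finite algebraic extension field
of F, and E the integral closure of R in L. Suppose there exist distinct maximal ideals
N₁,…,Nₙ of E and positive integers k₁,…,kₙ, h with IE = (N₁^{k₁} ⋯ Nₙ^{kₙ})^h.
Then there exists a module-finite integral extension domain A of R with quotient field
L and an ideal H of A such that (H^h)_a = (IA)_a. -/
theorem stmt10 {R : Type*} [CommRing R] [IsDomain R] [IsNoetherianRing R]
    (hdim : ringKrullDim R = 1)
    (I : Ideal R) (hI0 : I ≠ ⊥) (hItop : I ≠ ⊤)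
    (L : Type*) [Field L] [Algebra R L] [Algebra (FractionRing R) L]
    [IsScalarTower R (FractionRing R) L] [FiniteDimensional (FractionRing R) L]
    {n : ℕ} (N : Fin n → Ideal (integralClosure R L))
    (hNinj : Function.Injective N) (hNmax : ∀ i, (N i).IsMaximal)
    (k : Fin n → ℕ) (hk : ∀ i, 0 < k i) (h : ℕ) (hh : 0 < h)
    (hIE : I.map (algebraMap R (integralClosure R L)) = (∏ i, N i ^ k i) ^ h) :
    ∃ A : Subalgebra R L, Module.Finite R A ∧ Algebra.IsIntegral R A ∧
      IsFractionRing A L ∧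
      ∃ H : Ideal A, integralClosureOfIdeal (H ^ h) =
        integralClosureOfIdeal (I.map (algebraMap R A)) :=
  stmt10_general I L N k h hIE
end

section
/- Let R be an integrally closed Noetherian domain, b a nonzero nonunit of R, p₁,…,pₙ the height-one prime divisors of bR, and J = p₁ ∩ ⋯ ∩ pₙ. Assume bR = p₁^{(m)} ∩ ⋯ ∩ pₙ^{(m)} for a positive integer m (symbolic powers). If (J^k)_a = cR is principal for some positive integer k and c ∈ R, then the set of height-one primes containing cR is exactly {p₁,…,pₙ}. -/
/-- A height-one prime ideal: a nonzero prime whose only strictly smaller prime is ⊥. -/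
def IsHeightOnePrime {R : Type*} [CommRing R] (p : Ideal R) : Prop :=
  p.IsPrime ∧ p ≠ ⊥ ∧ ∀ q : Ideal R, q.IsPrime → q < p → q = ⊥

/-- The m-th symbolic power `p^{(m)} = p^m R_p ∩ R` of a prime ideal `p`,
described elementwise. -/
def symbolicPower {R : Type*} [CommRing R] (p : Ideal R) (m : ℕ) : Set R :=
  {x | ∃ s, s ∉ p ∧ s * x ∈ p ^ m}

/-!
Since `J^k ⊆ (J^k)_a = cR` and every element integral over `J^k` lies in `Rad(J^k) = J`, we have
`J^k ⊆ cR ⊆ J`. Hence a prime contains `c` iff it contains `J = p₁ ∩ ⋯ ∩ pₙ`, iff it contains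
some `pᵢ`; for a height-one prime this means it equals that `pᵢ`.
-/

section

variable {R : Type*} [CommRing R]

theorem subset_integralClosureOfIdeal (I : Ideal R) : (I : Set R) ⊆ integralClosureOfIdeal I := by
  intro x hx
  refine ⟨1, one_pos, fun _ => -x, fun i hi => ?_, by simp⟩
  rw [Finset.Icc_self, Finset.mem_singleton] at hi
  subst hi
  simpa using I.neg_mem hx

theorem integralClosureOfIdeal_subset_radical (I : Ideal R) :
    integralClosureOfIdeal I ⊆ I.radical := by
  rintro x ⟨N, -, a, ha, heq⟩
  refine ⟨N, ?_⟩
  rw [eq_neg_of_add_eq_zero_left heq]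
  refine I.neg_mem (I.sum_mem fun i hi => I.mul_mem_right _ ?_)
  exact Ideal.pow_le_self (Nat.one_le_iff_ne_zero.mp (Finset.mem_Icc.mp hi).1) (ha i hi)

theorem IsHeightOnePrime.eq_of_le {p q : Ideal R} (hq : IsHeightOnePrime q) (hp : p.IsPrime)
    (hp0 : p ≠ ⊥) (h : p ≤ q) : p = q := by
  by_contra hne
  exact hp0 (hq.2.2 p hp (lt_of_le_of_ne h hne))

theorem IsHeightOnePrime.iInf_le_iff {ι : Type*} [Fintype ι] {p : ι → Ideal R}
    (hp : ∀ i, (p i).IsPrime ∧ p i ≠ ⊥) {q : Ideal R} (hq : IsHeightOnePrime q) :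
    ⨅ i, p i ≤ q ↔ ∃ i, p i = q := by
  rw [← Finset.inf_univ_eq_iInf, hq.1.inf_le']
  constructor
  · rintro ⟨i, -, hi⟩
    exact ⟨i, hq.eq_of_le (hp i).1 (hp i).2 hi⟩
  · rintro ⟨i, rfl⟩
    exact ⟨i, Finset.mem_univ i, le_rfl⟩

theorem Ideal.IsPrime.mem_iff_le_of_le_span_singleton {I q : Ideal R} {c : R}
    (hq : q.IsPrime) (hI : I ≤ Ideal.span {c}) (hc : c ∈ I.radical) : c ∈ q ↔ I ≤ q := by
  refine ⟨fun hcq => hI.trans ((Ideal.span_singleton_le_iff_mem q).mpr hcq), fun hIq => ?_⟩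
  exact (hq.radical_le_iff.mpr hIq) hc

end

theorem stmt12_general {R : Type*} [CommRing R]
    {n : ℕ} (p : Fin n → Ideal R)
    (hp1 : ∀ i, IsHeightOnePrime (p i))
    (J : Ideal R) (hJ : J = ⨅ i, p i)
    (k : ℕ) (hk : 0 < k) (c : R)
    (hc : integralClosureOfIdeal (J ^ k) = (Ideal.span {c} : Ideal R)) :
    ∀ q : Ideal R, IsHeightOnePrime q → (c ∈ q ↔ ∃ i, q = p i) := by
  have hJk : J ^ k ≤ Ideal.span {c} := (subset_integralClosureOfIdeal _).trans hc.le
  have hcJ : c ∈ (J ^ k).radical :=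
    integralClosureOfIdeal_subset_radical _ (hc ▸ Ideal.mem_span_singleton_self c)
  intro q hq
  rw [hq.1.mem_iff_le_of_le_span_singleton hJk hcJ, Ideal.IsPrime.pow_le_iff (hP := hq.1) hk.ne',
    hJ, hq.iInf_le_iff fun i => ⟨(hp1 i).1, (hp1 i).2.1⟩]
  exact exists_congr fun i => eq_comm

/-- Let R be an integrally closed Noetherian domain, b a nonzero nonunit,
p₁,…,pₙ the height-one prime divisors of bR, J = p₁ ∩ ⋯ ∩ pₙ, and suppose
bR = p₁^{(m)} ∩ ⋯ ∩ pₙ^{(m)}. If (J^k)_a = cR is principal for some k > 0 and c ∈ R,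
then the set of height-one primes containing cR is exactly {p₁,…,pₙ}. -/
theorem stmt12 {R : Type*} [CommRing R] [IsDomain R] [IsIntegrallyClosed R]
    [IsNoetherianRing R] (b : R) (hb0 : b ≠ 0) (hbu : ¬ IsUnit b)
    {n : ℕ} (p : Fin n → Ideal R) (hpinj : Function.Injective p)
    (hp1 : ∀ i, IsHeightOnePrime (p i))
    (hdiv : ∀ q : Ideal R, (IsHeightOnePrime q ∧ b ∈ q) ↔ ∃ i, q = p i)
    (m : ℕ) (hm : 0 < m)
    (hbm : (Ideal.span {b} : Set R) = ⋂ i, symbolicPower (p i) m)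
    (J : Ideal R) (hJ : J = ⨅ i, p i)
    (k : ℕ) (hk : 0 < k) (c : R)
    (hc : integralClosureOfIdeal (J ^ k) = (Ideal.span {c} : Ideal R)) :
    ∀ q : Ideal R, IsHeightOnePrime q → (c ∈ q ↔ ∃ i, q = p i) :=
  stmt12_general p hp1 J hJ k hk c hc
end

section
/- Let D be a semilocal principal ideal domain with maximal ideals M₁,…,Mₙ and let I = ∏ᵢ Mᵢ^{eᵢ} be a nonzero proper ideal. If E is a Dedekind domain integral over D such that every maximal ideal N of E lying over Mᵢ satisfies Mᵢ E_N = N^{eᵢ*} E_N where eᵢ* = (e₁⋯eₙ)/eᵢ, then IE = J^{e₁⋯eₙ} where J is the Jacobson radical of E extended appropriately, i.e. J = ∩{N : N maximal in E lying over some Mᵢ}. -/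
/-!
Every prime `N` of `E` containing `IE` lies over a unique `Mⱼ`, and its multiplicity in
`IE = ∏ᵢ (Mᵢ E)^{eᵢ}` is `eⱼ · eⱼ* = e₁⋯eₙ`, independently of `N`. A nonzero ideal all of whose
prime factors occur with the same multiplicity `k` is the `k`-th power of the product of its
distinct prime factors; in a Dedekind domain these are pairwise coprime, so that product is
their intersection, the radical of `IE`, which is `J`.
-/

open UniqueFactorizationMonoid

namespace UniqueFactorizationMonoid

variable {α : Type*} [CommMonoidWithZero α] [NormalizationMonoid α] [UniqueFactorizationMonoid α]

theorem normalizedFactors_finset_prod {ι : Type*} (s : Finset ι) (g : ι → α)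
    (hg : ∀ i ∈ s, g i ≠ 0) :
    normalizedFactors (∏ i ∈ s, g i) = ∑ i ∈ s, normalizedFactors (g i) := by
  rw [Finset.prod_eq_multiset_prod, normalizedFactors_multiset_prod _ (by simpa using hg),
    Multiset.map_map]
  rfl

theorem associated_radical_pow_of_count_eq [DecidableEq α] {a : α} (ha : a ≠ 0) {k : ℕ}
    (h : ∀ p ∈ normalizedFactors a, (normalizedFactors a).count p = k) :
    Associated a (radical a ^ k) := by
  have hfactors : normalizedFactors a = k • (primeFactors a).val := by
    ext p
    rw [Multiset.count_nsmul]
    by_cases hp : p ∈ normalizedFactors a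
    · rw [h p hp, Multiset.count_eq_one_of_mem (primeFactors a).nodup
        (mem_primeFactors.2 hp), mul_one]
    · rw [Multiset.count_eq_zero_of_notMem hp,
        Multiset.count_eq_zero_of_notMem (mt mem_primeFactors.1 hp), mul_zero]
  calc Associated a (normalizedFactors a).prod := (prod_normalizedFactors ha).symm
    _ = radical a ^ k := by rw [hfactors, Multiset.prod_nsmul, radical, Finset.prod_val]

end UniqueFactorizationMonoid

namespace IsDedekindDomain

variable {R : Type*} [CommRing R] [IsDedekindDomain R]

theorem radical_eq_ideal_radical {A : Ideal R} (hA : A ≠ ⊥) :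
    radical A = A.radical := by
  classical
  have hprime : ∀ P ∈ primeFactors A, Prime P :=
    fun P hP => prime_of_normalized_factor P (mem_primeFactors.1 hP)
  have hinf := inf_pow_eq_prod_of_prime (primeFactors A) id (fun _ => 1) hprime
    (fun _ _ _ _ h => h)
  simp only [id_eq, pow_one] at hinf
  change ∏ P ∈ primeFactors A, P = _
  have hset : {P | A ≤ P ∧ P.IsPrime} = ↑(primeFactors A) := by
    ext P
    rw [Finset.mem_coe, mem_primeFactors, Ideal.mem_normalizedFactors_iff hA, and_comm]
    rfl
  rw [← hinf, Ideal.radical_eq_sInf, hset, ← Finset.inf_id_eq_sInf]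
  rfl

end IsDedekindDomain

namespace Ideal

theorem exists_eq_of_prod_pow_le {R ι : Type*} [CommRing R] {s : Finset ι} {M : ι → Ideal R}
    (hM : ∀ i ∈ s, (M i).IsMaximal) (e : ι → ℕ) {Q : Ideal R} [hQ : Q.IsPrime]
    (h : ∏ i ∈ s, M i ^ e i ≤ Q) : ∃ i ∈ s, Q = M i := by
  obtain ⟨i, hi, hle⟩ := hQ.prod_le.mp h
  exact ⟨i, hi, ((hM i hi).eq_of_le hQ.ne_top (hQ.le_of_pow_le hle)).symm⟩

theorem count_normalizedFactors_map_prod_pow {R S ι : Type*} [CommRing R] [CommRing S]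
    [IsDedekindDomain S] [Algebra R S] (s : Finset ι) (p : ι → Ideal R) (e : ι → ℕ)
    (hp : ∀ i ∈ s, map (algebraMap R S) (p i) ≠ ⊥) {P : Ideal S} [hP : P.IsPrime]
    (hP0 : P ≠ ⊥) :
    (normalizedFactors (map (algebraMap R S) (∏ i ∈ s, p i ^ e i))).count P =
      ∑ i ∈ s, e i * ramificationIdx' (p i) P := by
  classical
  have hmap : map (algebraMap R S) (∏ i ∈ s, p i ^ e i) =
      ∏ i ∈ s, map (algebraMap R S) (p i ^ e i) :=
    map_prod (mapHom (algebraMap R S)) _ s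
  rw [hmap, normalizedFactors_finset_prod _ _ fun i hi => ?_, Multiset.count_sum']
  · refine Finset.sum_congr rfl fun i hi => ?_
    rw [Ideal.map_pow, normalizedFactors_pow, Multiset.count_nsmul,
      IsDedekindDomain.ramificationIdx'_eq_normalizedFactors_count (hp i hi) hP hP0]
  · rw [Ideal.map_pow]
    exact pow_ne_zero _ (hp i hi)

theorem count_normalizedFactors_map_prod_pow_of_comap_eq {R S ι : Type*} [CommRing R]
    [CommRing S] [IsDedekindDomain S] [Algebra R S] [Fintype ι] {M : ι → Ideal R}
    (hMinj : Function.Injective M) (hMmax : ∀ i, (M i).IsMaximal) (e : ι → ℕ)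
    (hM : ∀ i, map (algebraMap R S) (M i) ≠ ⊥) {P : Ideal S} [P.IsPrime] (hP0 : P ≠ ⊥)
    {j : ι} (hj : P.comap (algebraMap R S) = M j) :
    (normalizedFactors (map (algebraMap R S) (∏ i, M i ^ e i))).count P =
      e j * ramificationIdx' (M j) P := by
  rw [count_normalizedFactors_map_prod_pow _ _ _ (fun i _ => hM i) hP0,
    Finset.sum_eq_single_of_mem j (Finset.mem_univ j)]
  intro i _ hij
  rw [ramificationIdx'_of_not_le, mul_zero]
  intro hle
  exact hij (hMinj ((hMmax i).eq_of_le (hMmax j).ne_top (hj ▸ map_le_iff_le_comap.mp hle)))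

end Ideal

open Ideal

theorem stmt16_general {D E : Type*} [CommRing D]
    [CommRing E] [IsDedekindDomain E] [Algebra D E]
    (hinj : Function.Injective (algebraMap D E))
    {n : ℕ} (M : Fin n → Ideal D)
    (hMinj : Function.Injective M) (hMmax : ∀ i, (M i).IsMaximal)
    (e : Fin n → ℕ) (he : ∀ i, 0 < e i)
    (I : Ideal D) (hI0 : I ≠ ⊥) (hI : I = ∏ i, M i ^ e i)
    (hram : ∀ (i : Fin n) (N : Ideal E), N.IsMaximal →
      N.comap (algebraMap D E) = M i →
      Ideal.ramificationIdx' (M i) N = (∏ j, e j) / e i)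
    (J : Ideal E)
    (hJ : J = sInf {N : Ideal E | N.IsMaximal ∧
      ∃ i, N.comap (algebraMap D E) = M i}) :
    Ideal.map (algebraMap D E) I = J ^ (∏ i, e i) := by
  classical
  subst hI
  have hmap0 {A : Ideal D} (hA : A ≠ ⊥) : map (algebraMap D E) A ≠ ⊥ :=
    (map_eq_bot_iff_of_injective hinj).not.mpr hA
  have hM0 (i : Fin n) : M i ≠ ⊥ := fun hMi => hI0 <|
    Finset.prod_eq_zero (Finset.mem_univ i) (by rw [hMi, ← zero_eq_bot, zero_pow (he i).ne'])
  have hIE0 := hmap0 hI0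
  have hover (N : Ideal E) [N.IsPrime] (hN : map (algebraMap D E) (∏ i, M i ^ e i) ≤ N) :
      N ≠ ⊥ ∧ ∃ i, N.comap (algebraMap D E) = M i := by
    obtain ⟨i, -, hi⟩ :=
      exists_eq_of_prod_pow_le (fun i _ => hMmax i) e (map_le_iff_le_comap.mp hN)
    exact ⟨fun h => hIE0 (le_bot_iff.mp (h ▸ hN)), i, hi⟩
  have hJrad : J = (map (algebraMap D E) (∏ i, M i ^ e i)).radical := by
    rw [hJ, radical_eq_sInf]
    congr 1
    ext N
    constructor
    · rintro ⟨hN, i, hi⟩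
      refine ⟨map_le_iff_le_comap.mpr (hi ▸ ?_), hN.isPrime⟩
      exact (le_of_dvd (Finset.dvd_prod_of_mem _ (Finset.mem_univ i))).trans
        (pow_le_self (he i).ne')
    · rintro ⟨hle, hN⟩
      obtain ⟨hN0, hlies⟩ := hover N hle
      exact ⟨hN.isMaximal hN0, hlies⟩
  rw [hJrad, ← IsDedekindDomain.radical_eq_ideal_radical hIE0]
  refine associated_iff_eq.mp (associated_radical_pow_of_count_eq hIE0 fun q hq => ?_)
  obtain ⟨hq, hqle⟩ := (Ideal.mem_normalizedFactors_iff hIE0).mp hq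
  obtain ⟨hq0, j, hj⟩ := hover q hqle
  rw [count_normalizedFactors_map_prod_pow_of_comap_eq hMinj hMmax e (fun i => hmap0 (hM0 i))
    hq0 hj, hram j q (hq.isMaximal hq0) hj,
    Nat.mul_div_cancel' (Finset.dvd_prod_of_mem e (Finset.mem_univ j))]

/-- (*1) of Remark 2.9.1: Let D be a semilocal PID with maximal ideals
M₁,…,Mₙ and I = ∏ᵢ Mᵢ^{eᵢ} a nonzero proper ideal. If E is a Dedekind domain integral
over D such that every maximal ideal N of E lying over Mᵢ has ramification index
eᵢ* = (e₁⋯eₙ)/eᵢ over Mᵢ, then IE = J^{e₁⋯eₙ}, where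
J = ∩{N : N maximal ideal of E lying over some Mᵢ}. -/
theorem stmt16 {D E : Type*} [CommRing D] [IsDomain D] [IsPrincipalIdealRing D]
    [CommRing E] [IsDomain E] [IsDedekindDomain E] [Algebra D E]
    (hinj : Function.Injective (algebraMap D E)) [Algebra.IsIntegral D E]
    {n : ℕ} (hn : 0 < n) (M : Fin n → Ideal D)
    (hMinj : Function.Injective M) (hMmax : ∀ i, (M i).IsMaximal)
    (hMall : ∀ Q : Ideal D, Q.IsMaximal → ∃ i, Q = M i)
    (e : Fin n → ℕ) (he : ∀ i, 0 < e i)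
    (I : Ideal D) (hI0 : I ≠ ⊥) (hItop : I ≠ ⊤) (hI : I = ∏ i, M i ^ e i)
    (hram : ∀ (i : Fin n) (N : Ideal E), N.IsMaximal →
      N.comap (algebraMap D E) = M i →
      Ideal.ramificationIdx' (M i) N = (∏ j, e j) / e i)
    (J : Ideal E)
    (hJ : J = sInf {N : Ideal E | N.IsMaximal ∧
      ∃ i, N.comap (algebraMap D E) = M i}) :
    Ideal.map (algebraMap D E) I = J ^ (∏ i, e i) :=
  stmt16_general hinj M hMinj hMmax e he I hI0 hI hram J hJ
end
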